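/- arXiv:math/0112070 — 3 statements merged into one kernel-verified Lean document; each statement's English description precedes it below -/
import Mathlib

section
/- For every permutation σ in the symmetric group S_n, the k-th elementary symmetric function e_k(ξ_1,…,ξ_n) of the Jucys–Murphy elements, viewed in the group algebra ℚ[S_n], equals the sum of all permutations in S_n having exactly n−k cycles (including fixed points as cycles). -/
/-- The Jucys–Murphy element `ξ_j = Σ_{i<j} (i,j)` in the group algebra `ℚ[S_n]`. -/
noncomputable def JM (n : ℕ) (j : Fin n) : MonoidAlgebra ℚ (Equiv.Perm (Fin n)) :=
  ∑ i ∈ Finset.univ.filter (fun i => i < j),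
    MonoidAlgebra.of ℚ (Equiv.Perm (Fin n)) (Equiv.swap i j)

/-- The number of cycles of a permutation of `Fin n`, counting fixed points as cycles:
the number of fixed points plus the number of nontrivial cycles. -/
def numCycles {n : ℕ} (σ : Equiv.Perm (Fin n)) : ℕ :=
  (n - σ.support.card) + σ.cycleType.card

namespace JucysAux

open Equiv Equiv.Perm Finset

variable {α : Type*} [DecidableEq α] [Fintype α]

theorem support_cycle_grow {c : Perm α} {a b : α} (ha : a ∈ c.support) (hb : b ∉ c.support) :
    (c * Equiv.swap a b).support = insert b c.support := by
  have hab : a ≠ b := fun h => hb (h ▸ ha)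
  have hcb : c b = b := notMem_support.1 hb
  ext x
  rcases eq_or_ne x b with rfl | hxb
  · simp only [mem_insert, true_or, iff_true, mem_support, mul_apply, swap_apply_right]
    intro h
    exact hb (h ▸ apply_mem_support.2 ha)
  rcases eq_or_ne x a with rfl | hxa
  · simp only [mem_insert, mem_support, mul_apply, swap_apply_left, hcb]
    constructor
    · intro _; right; exact mem_support.1 ha
    · intro _; exact fun h => hab h.symm
  · simp only [mem_insert, mem_support, mul_apply, swap_apply_of_ne_of_ne hxa hxb]
    constructor
    · intro h; right; exact h
    · rintro (h | h); · exact absurd h hxb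
      · exact h

theorem isCycle_cycle_grow {c : Perm α} {a b : α} (hc : c.IsCycle)
    (ha : a ∈ c.support) (hb : b ∉ c.support) : (c * Equiv.swap a b).IsCycle := by
  have hab : a ≠ b := fun h => hb (h ▸ ha)
  have hcb : c b = b := notMem_support.1 hb
  set c' := c * Equiv.swap a b with hc'
  have hc'a : c' a = b := by simp [hc', mul_apply, hcb]
  have hc'b : c' b = c a := by simp [hc', mul_apply]
  have hc'x : ∀ x, x ≠ a → x ≠ b → c' x = c x := fun x hxa hxb => by
    simp [hc', mul_apply, swap_apply_of_ne_of_ne hxa hxb]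
  have key : ∀ m : ℕ, ∃ j : ℕ, (c' ^ j) a = (c ^ m) a := by
    intro m
    induction m with
    | zero => exact ⟨0, rfl⟩
    | succ m ih =>
      obtain ⟨j, hj⟩ := ih
      rcases eq_or_ne ((c ^ m) a) a with h | h
      · refine ⟨2, ?_⟩
        rw [pow_two, mul_apply, hc'a, hc'b, pow_succ', mul_apply, h]
      · have hmem : (c ^ m) a ∈ c.support := (pow_apply_mem_support).2 ha
        have hne_b : (c ^ m) a ≠ b := fun hcontra => hb (hcontra ▸ hmem)
        refine ⟨j + 1, ?_⟩
        rw [pow_succ', mul_apply, hj, hc'x _ h hne_b, pow_succ', mul_apply]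
  refine ⟨a, by rw [hc'a]; exact hab.symm, fun y hy => ?_⟩
  have hy' : y ∈ c'.support := mem_support.2 hy
  rw [hc', support_cycle_grow ha hb, mem_insert] at hy'
  rcases hy' with rfl | hy'
  · exact ⟨1, by simpa using hc'a⟩
  · obtain ⟨m, hm⟩ := hc.exists_pow_eq (mem_support.1 ha) (mem_support.1 hy')
    obtain ⟨j, hj⟩ := key m
    exact ⟨j, by rw [zpow_natCast, hj, hm]⟩

theorem grow_card_support_cycleType {f : Perm α} {a b : α}
    (ha : a ∈ f.support) (hb : b ∉ f.support) :
    (f * Equiv.swap a b).support.card = f.support.card + 1 ∧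
    (f * Equiv.swap a b).cycleType.card = f.cycleType.card := by
  classical
  set c := f.cycleOf a with hcdef
  have hfa : f a ≠ a := mem_support.1 ha
  have hc : c.IsCycle := isCycle_cycleOf f hfa
  have hmem : c ∈ f.cycleFactorsFinset := cycleOf_mem_cycleFactorsFinset_iff.2 ha
  have hdisj : Perm.Disjoint (f * c⁻¹) c := disjoint_mul_inv_of_mem_cycleFactorsFinset hmem
  set g := f * c⁻¹ with hgdef
  have hfg : f = g * c := by rw [hgdef, inv_mul_cancel_right]
  have hsc : c.support ⊆ f.support := support_cycleOf_le f a
  have hac : a ∈ c.support := by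
    rw [hcdef, mem_support_cycleOf_iff]
    exact ⟨SameCycle.refl _ _, ha⟩
  have hbc : b ∉ c.support := fun h => hb (hsc h)
  have hgsub : g.support ⊆ f.support := by
    intro x hx
    have hx' := support_mul_le f c⁻¹ hx
    rw [Finset.sup_eq_union, support_inv, mem_union] at hx'
    rcases hx' with h | h
    · exact h
    · exact hsc h
  have hbg : b ∉ g.support := fun h => hb (hgsub h)
  have hsupc' : (c * Equiv.swap a b).support = insert b c.support :=
    support_cycle_grow hac hbc
  have hcyc' : (c * Equiv.swap a b).IsCycle := isCycle_cycle_grow hc hac hbc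
  have hdisj' : Perm.Disjoint g (c * Equiv.swap a b) := by
    rw [disjoint_iff_disjoint_support, hsupc', Finset.disjoint_insert_right]
    exact ⟨hbg, hdisj.disjoint_support⟩
  have hkey : f * Equiv.swap a b = g * (c * Equiv.swap a b) := by
    rw [hfg, mul_assoc]
  have hsupf : f.support = g.support ∪ c.support := by
    rw [hfg, hdisj.support_mul]
  have hbgc : b ∉ g.support ∪ c.support := by
    rw [← hsupf]; exact hb
  constructor
  · rw [hkey, hdisj'.support_mul, hsupc', Finset.union_insert, Finset.card_insert_of_notMem hbgc,
      hsupf]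
  · rw [hkey, hdisj'.cycleType_mul, hfg, hdisj.cycleType_mul, Multiset.card_add, Multiset.card_add,
      hcyc'.cycleType, hc.cycleType]
    simp

/-- The equivalence between `Fin n` and the non-`last` elements of `Fin (n+1)`. -/
def lastEquiv (n : ℕ) : Fin n ≃ {x : Fin (n + 1) // x ≠ Fin.last n} where
  toFun i := ⟨i.castSucc, (Fin.castSucc_lt_last i).ne⟩
  invFun x := x.1.castPred x.2
  left_inv i := by simp
  right_inv x := by simp

/-- Embedding of `Perm (Fin n)` into `Perm (Fin (n+1))` fixing `last n`. -/
noncomputable def permIncl (n : ℕ) : Equiv.Perm (Fin n) →* Equiv.Perm (Fin (n + 1)) :=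
  Equiv.Perm.extendDomainHom (lastEquiv n)

theorem permIncl_apply_castSucc (n : ℕ) (σ : Equiv.Perm (Fin n)) (i : Fin n) :
    permIncl n σ i.castSucc = (σ i).castSucc := by
  exact Equiv.Perm.extendDomain_apply_image σ (lastEquiv n) i

theorem permIncl_apply_last (n : ℕ) (σ : Equiv.Perm (Fin n)) :
    permIncl n σ (Fin.last n) = Fin.last n := by
  show σ.extendDomain (lastEquiv n) (Fin.last n) = _
  exact Equiv.Perm.extendDomain_apply_not_subtype σ (lastEquiv n) (by simp)

theorem permIncl_swap (n : ℕ) (i j : Fin n) :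
    permIncl n (Equiv.swap i j) = Equiv.swap i.castSucc j.castSucc := by
  ext x
  refine Fin.lastCases ?_ (fun x => ?_) x
  · rw [permIncl_apply_last,
      Equiv.swap_apply_of_ne_of_ne (Fin.castSucc_lt_last i).ne' (Fin.castSucc_lt_last j).ne']
  · rw [permIncl_apply_castSucc, Fin.castSucc_injective n |>.swap_apply]

theorem cycleType_permIncl (n : ℕ) (σ : Equiv.Perm (Fin n)) :
    (permIncl n σ).cycleType = σ.cycleType :=
  Equiv.Perm.cycleType_extendDomain (lastEquiv n)

theorem card_support_permIncl (n : ℕ) (σ : Equiv.Perm (Fin n)) :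
    (permIncl n σ).support.card = σ.support.card :=
  Equiv.Perm.card_support_extend_domain (lastEquiv n)

theorem last_not_mem_support_permIncl (n : ℕ) (σ : Equiv.Perm (Fin n)) :
    Fin.last n ∉ (permIncl n σ).support :=
  Equiv.Perm.notMem_support.2 (permIncl_apply_last n σ)

theorem card_support_le {m : ℕ} (σ : Equiv.Perm (Fin m)) : σ.support.card ≤ m := by
  simpa using Finset.card_le_univ σ.support

theorem numCycles_one (m : ℕ) : numCycles (1 : Equiv.Perm (Fin m)) = m := by
  simp [numCycles]

theorem numCycles_eq_iff {m : ℕ} (σ : Equiv.Perm (Fin m)) : numCycles σ = m ↔ σ = 1 := by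
  constructor
  · intro h
    have h1 : σ.cycleType.sum = σ.support.card := Equiv.Perm.sum_cycleType σ
    have h2 : Multiset.card σ.cycleType • 2 ≤ σ.cycleType.sum :=
      Multiset.card_nsmul_le_sum fun x hx => Equiv.Perm.two_le_of_mem_cycleType hx
    have h3 := card_support_le σ
    rw [← Equiv.Perm.support_eq_empty_iff, ← Finset.card_eq_zero]
    rw [smul_eq_mul] at h2
    unfold numCycles at h
    omega
  · rintro rfl; exact numCycles_one m

theorem numCycles_permIncl (n : ℕ) (σ : Equiv.Perm (Fin n)) :
    numCycles (permIncl n σ) = numCycles σ + 1 := by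
  have h := card_support_le σ
  unfold numCycles
  rw [cycleType_permIncl, card_support_permIncl]
  omega

theorem numCycles_mul_swap {m : ℕ} {σ : Equiv.Perm (Fin m)} {a b : Fin m}
    (hb : b ∉ σ.support) (hab : a ≠ b) :
    numCycles (σ * Equiv.swap a b) + 1 = numCycles σ := by
  by_cases ha : a ∈ σ.support
  · obtain ⟨h1, h2⟩ := grow_card_support_cycleType ha hb
    have h3 := card_support_le (σ * Equiv.swap a b)
    unfold numCycles
    rw [h1, h2]
    omega
  · have hd : Perm.Disjoint σ (Equiv.swap a b) := by
      rw [disjoint_iff_disjoint_support, support_swap hab]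
      refine Finset.disjoint_left.2 fun x hx => ?_
      simp only [mem_insert, mem_singleton]
      rintro (rfl | rfl)
      · exact ha hx
      · exact hb hx
    have h1 : (σ * Equiv.swap a b).support.card = σ.support.card + 2 := by
      rw [hd.support_mul, Finset.card_union_of_disjoint hd.disjoint_support,
        Equiv.Perm.card_support_swap hab]
    have h2 : (σ * Equiv.swap a b).cycleType.card = σ.cycleType.card + 1 := by
      rw [hd.cycleType_mul, (isCycle_swap hab).cycleType, Multiset.card_add]
      simp
    have h3 := card_support_le (σ * Equiv.swap a b)
    unfold numCycles
    rw [h1, h2] at *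
    omega

theorem sort_map_castSucc {n : ℕ} (s : Finset (Fin n)) :
    (s.map Fin.castSuccEmb).sort (· ≤ ·) = (s.sort (· ≤ ·)).map Fin.castSucc := by
  refine (fun hp h1 h2 => List.Perm.eq_of_pairwise' h1 h2 hp) ?_ (Finset.pairwise_sort _ _) ?_
  · rw [← Multiset.coe_eq_coe, Finset.sort_eq, Finset.map_val, ← Finset.sort_eq s (· ≤ ·),
      Multiset.map_coe]
    rfl
  · exact List.Pairwise.map _ (fun a b h => by simpa using h) (Finset.pairwise_sort s _)

theorem sort_insert_last {n : ℕ} (s : Finset (Fin (n + 1))) (h : Fin.last n ∉ s) :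
    (insert (Fin.last n) s).sort (· ≤ ·) = s.sort (· ≤ ·) ++ [Fin.last n] := by
  refine (fun hp h1 h2 => List.Perm.eq_of_pairwise' h1 h2 hp) ?_ (Finset.pairwise_sort _ _) ?_
  · rw [← Multiset.coe_eq_coe, Finset.sort_eq, Finset.insert_val, Multiset.ndinsert_of_notMem h,
      ← Finset.sort_eq s (· ≤ ·)]
    exact Multiset.coe_eq_coe.2 ((s.sort (· ≤ ·)).perm_append_singleton _).symm
  · rw [List.pairwise_append]
    refine ⟨Finset.pairwise_sort _ _, List.pairwise_singleton _ _, fun x hx y hy => ?_⟩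
    rw [List.mem_singleton] at hy
    subst hy
    exact Fin.le_last x

theorem mapD_of (n : ℕ) (σ : Equiv.Perm (Fin n)) :
    MonoidAlgebra.mapDomainRingHom ℚ (permIncl n) (MonoidAlgebra.of ℚ (Equiv.Perm (Fin n)) σ)
      = MonoidAlgebra.of ℚ (Equiv.Perm (Fin (n + 1))) (permIncl n σ) := by
  rw [MonoidAlgebra.of_apply, MonoidAlgebra.of_apply]
  exact MonoidAlgebra.mapDomain_single

theorem JM_castSucc (n : ℕ) (j : Fin n) :
    JM (n + 1) j.castSucc = MonoidAlgebra.mapDomainRingHom ℚ (permIncl n) (JM n j) := by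
  unfold JM
  rw [map_sum]
  have h1 : (Finset.univ.filter (fun i => i < j.castSucc)) = Finset.Iio j.castSucc := by
    ext x; simp only [Finset.mem_filter, Finset.mem_Iio, Finset.mem_univ, true_and]
  have h2 : (Finset.univ.filter (fun i => i < j)) = Finset.Iio j := by
    ext x; simp only [Finset.mem_filter, Finset.mem_Iio, Finset.mem_univ, true_and]
  rw [h1, h2, Fin.Iio_castSucc, Finset.sum_map]
  refine Finset.sum_congr rfl fun i _ => ?_
  rw [mapD_of, permIncl_swap]
  rfl

theorem filter_lt_last (n : ℕ) :
    (Finset.univ.filter (fun i => i < Fin.last n)) = Finset.univ.erase (Fin.last n) := by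
  ext x
  simp [Fin.lt_last_iff_ne_last]

/-- The gluing map used in the inductive step. -/
noncomputable def glue (n : ℕ) : Equiv.Perm (Fin n) × Fin (n + 1) → Equiv.Perm (Fin (n + 1)) :=
  fun p => permIncl n p.1 * Equiv.swap p.2 (Fin.last n)

theorem glue_bijective (n : ℕ) : Function.Bijective (glue n) := by
  rw [Fintype.bijective_iff_injective_and_card]
  constructor
  · rintro ⟨σ₁, i₁⟩ ⟨σ₂, i₂⟩ h
    simp only [glue] at h
    have hi : i₁ = i₂ := by
      by_contra hne
      have hmul : (permIncl n σ₂)⁻¹ * permIncl n σ₁ =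
          Equiv.swap i₂ (Fin.last n) * Equiv.swap i₁ (Fin.last n) := by
        calc (permIncl n σ₂)⁻¹ * permIncl n σ₁
            = (permIncl n σ₂)⁻¹ * (permIncl n σ₁ * Equiv.swap i₁ (Fin.last n)) *
              Equiv.swap i₁ (Fin.last n) := by
              rw [mul_assoc, mul_assoc, Equiv.swap_mul_self, mul_one]
          _ = (permIncl n σ₂)⁻¹ * (permIncl n σ₂ * Equiv.swap i₂ (Fin.last n)) *
              Equiv.swap i₁ (Fin.last n) := by rw [h]
          _ = Equiv.swap i₂ (Fin.last n) * Equiv.swap i₁ (Fin.last n) := by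
              rw [inv_mul_cancel_left]
      have hlast : ((permIncl n σ₂)⁻¹ * permIncl n σ₁) (Fin.last n) = Fin.last n := by
        rw [Equiv.Perm.mul_apply, permIncl_apply_last, ← map_inv, permIncl_apply_last]
      rw [hmul, Equiv.Perm.mul_apply, Equiv.swap_apply_right] at hlast
      rcases eq_or_ne i₁ (Fin.last n) with hl | hl
      · rw [hl, Equiv.swap_apply_right] at hlast
        exact hne (hl.trans hlast.symm)
      · rw [Equiv.swap_apply_of_ne_of_ne hne hl] at hlast
        exact hl hlast
    subst hi
    have : permIncl n σ₁ = permIncl n σ₂ := mul_right_cancel h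
    exact Prod.ext (Equiv.Perm.extendDomainHom_injective (lastEquiv n) this) rfl
  · simp [Fintype.card_perm, Nat.factorial_succ, mul_comm]

theorem rhs_step (n k : ℕ) :
    (∑ τ ∈ Finset.univ.filter
        (fun τ : Equiv.Perm (Fin (n + 1)) => numCycles τ + (k + 1) = n + 1),
        MonoidAlgebra.of ℚ (Equiv.Perm (Fin (n + 1))) τ)
    = (∑ σ ∈ Finset.univ.filter (fun σ : Equiv.Perm (Fin n) => numCycles σ + (k + 1) = n),
        MonoidAlgebra.of ℚ (Equiv.Perm (Fin (n + 1))) (permIncl n σ))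
      + ∑ σ ∈ Finset.univ.filter (fun σ : Equiv.Perm (Fin n) => numCycles σ + k = n),
          ∑ i ∈ Finset.univ.erase (Fin.last n),
            MonoidAlgebra.of ℚ (Equiv.Perm (Fin (n + 1)))
              (permIncl n σ * Equiv.swap i (Fin.last n)) := by
  classical
  rw [Finset.sum_filter]
  have hbij := glue_bijective n
  have hswap : ∀ p : Equiv.Perm (Fin n) × Fin (n + 1),
      (fun p : Equiv.Perm (Fin n) × Fin (n + 1) =>
        if numCycles (glue n p) + (k + 1) = n + 1
        then MonoidAlgebra.of ℚ (Equiv.Perm (Fin (n + 1))) (glue n p) else 0) p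
      = (fun τ : Equiv.Perm (Fin (n + 1)) =>
          if numCycles τ + (k + 1) = n + 1
          then MonoidAlgebra.of ℚ (Equiv.Perm (Fin (n + 1))) τ else 0) (glue n p) :=
    fun p => rfl
  rw [← Fintype.sum_bijective (glue n) hbij _ _ hswap]
  rw [Fintype.sum_prod_type]
  have hsplit : ∀ σ : Equiv.Perm (Fin n),
      (∑ i : Fin (n + 1), if numCycles (glue n (σ, i)) + (k + 1) = n + 1
          then MonoidAlgebra.of ℚ (Equiv.Perm (Fin (n + 1))) (glue n (σ, i)) else 0)
      = (if numCycles σ + (k + 1) = n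
          then MonoidAlgebra.of ℚ (Equiv.Perm (Fin (n + 1))) (permIncl n σ) else 0)
        + (if numCycles σ + k = n
            then (∑ i ∈ Finset.univ.erase (Fin.last n),
              MonoidAlgebra.of ℚ (Equiv.Perm (Fin (n + 1)))
                (permIncl n σ * Equiv.swap i (Fin.last n))) else 0) := by
    intro σ
    rw [← Finset.add_sum_erase _ _ (Finset.mem_univ (Fin.last n))]
    have hglue : ∀ i, i ≠ Fin.last n → numCycles (glue n (σ, i)) = numCycles σ := by
      intro i hi
      have h1 := numCycles_mul_swap (last_not_mem_support_permIncl n σ) hi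
      have h2 := numCycles_permIncl n σ
      show numCycles (permIncl n σ * Equiv.swap i (Fin.last n)) = numCycles σ
      omega
    congr 1
    · have hg : glue n (σ, Fin.last n) = permIncl n σ := by
        show permIncl n σ * Equiv.swap (Fin.last n) (Fin.last n) = permIncl n σ
        rw [show Equiv.swap (Fin.last n) (Fin.last n) = 1 from
          (Equiv.swap_self _).trans (Equiv.Perm.one_def).symm, mul_one]
      rw [hg, numCycles_permIncl]
      exact if_congr (by omega) rfl rfl
    · by_cases hC : numCycles σ + k = n
      · rw [if_pos hC]
        refine Finset.sum_congr rfl fun i hi => ?_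
        have hi' : i ≠ Fin.last n := (Finset.mem_erase.1 hi).1
        rw [if_pos (by rw [hglue i hi']; omega)]
        rfl
      · rw [if_neg hC]
        refine Finset.sum_eq_zero fun i hi => ?_
        have hi' : i ≠ Fin.last n := (Finset.mem_erase.1 hi).1
        rw [if_neg (by rw [hglue i hi']; omega)]
  rw [Finset.sum_congr rfl (fun σ _ => hsplit σ), Finset.sum_add_distrib,
    ← Finset.sum_filter, ← Finset.sum_filter]

theorem jm_main (n : ℕ) : ∀ k : ℕ,
    ∑ s ∈ Finset.powersetCard k (Finset.univ : Finset (Fin n)),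
      ((s.sort (· ≤ ·)).map (JM n)).prod
    = ∑ σ ∈ Finset.univ.filter (fun σ : Equiv.Perm (Fin n) => numCycles σ + k = n),
        MonoidAlgebra.of ℚ (Equiv.Perm (Fin n)) σ := by
  induction n with
  | zero =>
    intro k
    cases k with
    | zero =>
      rw [Finset.powersetCard_zero, Finset.sum_singleton]
      have hL : ((∅ : Finset (Fin 0)).sort (· ≤ ·)).map (JM 0) = [] := by
        rw [Finset.sort_empty]; rfl
      rw [hL, List.prod_nil]
      have hfil : (Finset.univ.filter
          (fun σ : Equiv.Perm (Fin 0) => numCycles σ + 0 = 0)) = {1} := by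
        ext σ
        simp [Subsingleton.elim σ 1, numCycles_one]
      rw [hfil, Finset.sum_singleton, map_one]
    | succ k =>
      have h0 : (Finset.univ : Finset (Fin 0)) = ∅ := by simp
      rw [h0, show Finset.powersetCard (k + 1) (∅ : Finset (Fin 0)) = ∅ from by
        rw [Finset.powersetCard_eq_empty]; simp, Finset.sum_empty,
        Finset.filter_false_of_mem (fun σ _ => by omega), Finset.sum_empty]
  | succ n IH =>
    intro k
    cases k with
    | zero =>
      rw [Finset.powersetCard_zero, Finset.sum_singleton]
      have hL : ((∅ : Finset (Fin (n + 1))).sort (· ≤ ·)).map (JM (n + 1)) = [] := by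
        rw [Finset.sort_empty]; rfl
      rw [hL, List.prod_nil]
      have hfil : Finset.univ.filter
          (fun σ : Equiv.Perm (Fin (n + 1)) => numCycles σ + 0 = n + 1) = {1} := by
        ext σ
        simp only [Finset.mem_filter, Finset.mem_univ, true_and, Finset.mem_singleton,
          Nat.add_zero]
        exact numCycles_eq_iff σ
      rw [hfil, Finset.sum_singleton, map_one]
    | succ k =>
      have hlast_nm : Fin.last n ∉ (Finset.univ : Finset (Fin n)).map Fin.castSuccEmb := by
        intro hmem
        obtain ⟨a, -, ha⟩ := Finset.mem_map.1 hmem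
        exact (Fin.castSucc_lt_last a).ne ha
      have hdisj : Disjoint
          (Finset.powersetCard (k + 1) ((Finset.univ : Finset (Fin n)).map Fin.castSuccEmb))
          ((Finset.powersetCard k
            ((Finset.univ : Finset (Fin n)).map Fin.castSuccEmb)).image
              (insert (Fin.last n))) := by
        refine Finset.disjoint_left.2 fun s hs hs' => ?_
        have h1 : Fin.last n ∉ s := fun hmem =>
          hlast_nm ((Finset.mem_powersetCard.1 hs).1 hmem)
        obtain ⟨t, -, rfl⟩ := Finset.mem_image.1 hs'
        exact h1 (Finset.mem_insert_self _ _)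
      rw [Fin.univ_castSuccEmb, Finset.cons_eq_insert,
        Finset.powersetCard_succ_insert hlast_nm, Finset.sum_union hdisj]
      have hme : ∀ t : Finset (Fin n),
          (Finset.mapEmbedding Fin.castSuccEmb).toEmbedding t = t.map Fin.castSuccEmb :=
        fun _ => rfl
      have hmapJM : (JM (n + 1)) ∘ Fin.castSucc
          = (⇑(MonoidAlgebra.mapDomainRingHom ℚ (permIncl n))) ∘ (JM n) := by
        funext j
        exact JM_castSucc n j
      have hA : ∑ s ∈ Finset.powersetCard (k + 1)
            ((Finset.univ : Finset (Fin n)).map Fin.castSuccEmb),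
            ((s.sort (· ≤ ·)).map (JM (n + 1))).prod
          = MonoidAlgebra.mapDomainRingHom ℚ (permIncl n)
              (∑ s ∈ Finset.powersetCard (k + 1) (Finset.univ : Finset (Fin n)),
                ((s.sort (· ≤ ·)).map (JM n)).prod) := by
        rw [map_sum, Finset.powersetCard_map, Finset.sum_map]
        refine Finset.sum_congr rfl fun t _ => ?_
        rw [hme, sort_map_castSucc, List.map_map, map_list_prod,
          List.map_map, hmapJM]
      have hB : ∑ s ∈ (Finset.powersetCard k
            ((Finset.univ : Finset (Fin n)).map Fin.castSuccEmb)).image (insert (Fin.last n)),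
            ((s.sort (· ≤ ·)).map (JM (n + 1))).prod
          = (MonoidAlgebra.mapDomainRingHom ℚ (permIncl n)
              (∑ s ∈ Finset.powersetCard k (Finset.univ : Finset (Fin n)),
                ((s.sort (· ≤ ·)).map (JM n)).prod)) * JM (n + 1) (Fin.last n) := by
        rw [Finset.sum_image ?hinj]
        case hinj =>
          intro t₁ h₁ t₂ h₂ heq
          have m₁ : Fin.last n ∉ t₁ := fun hm =>
            hlast_nm ((Finset.mem_powersetCard.1 h₁).1 hm)
          have m₂ : Fin.last n ∉ t₂ := fun hm =>
            hlast_nm ((Finset.mem_powersetCard.1 h₂).1 hm)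
          rw [← Finset.erase_insert m₁, heq, Finset.erase_insert m₂]
        rw [map_sum, Finset.powersetCard_map, Finset.sum_map, Finset.sum_mul]
        refine Finset.sum_congr rfl fun t _ => ?_
        rw [hme]
        have hnm : Fin.last n ∉ t.map Fin.castSuccEmb := by
          intro hmem
          obtain ⟨a, -, ha⟩ := Finset.mem_map.1 hmem
          exact (Fin.castSucc_lt_last a).ne ha
        rw [sort_insert_last _ hnm, List.map_append, List.prod_append]
        congr 1
        · rw [sort_map_castSucc, List.map_map, map_list_prod, List.map_map, hmapJM]
        · simp
      rw [hA, hB, IH (k + 1), IH k, rhs_step n k]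
      congr 1
      · rw [map_sum]
        refine Finset.sum_congr rfl fun σ _ => mapD_of n σ
      · have hJMlast : JM (n + 1) (Fin.last n)
            = ∑ i ∈ Finset.univ.erase (Fin.last n),
                MonoidAlgebra.of ℚ (Equiv.Perm (Fin (n + 1))) (Equiv.swap i (Fin.last n)) := by
          unfold JM
          rw [filter_lt_last]
        rw [hJMlast, map_sum, Finset.sum_mul]
        refine Finset.sum_congr rfl fun σ _ => ?_
        rw [mapD_of, Finset.mul_sum]
        refine Finset.sum_congr rfl fun i _ => ?_
        exact (map_mul (MonoidAlgebra.of ℚ (Equiv.Perm (Fin (n + 1)))) _ _).symm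

end JucysAux

/-- Jucys' theorem: the `k`-th elementary symmetric function of the Jucys–Murphy
elements (the sum over `k`-element subsets `{j_1 < … < j_k}` of `ξ_{j_1} ⋯ ξ_{j_k}`)
equals the sum of all permutations in `S_n` with exactly `n - k` cycles. -/
theorem esymm_jucysMurphy (n k : ℕ) (hk : k ≤ n) :
    ∑ s ∈ Finset.powersetCard k (Finset.univ : Finset (Fin n)),
      ((s.sort (· ≤ ·)).map (JM n)).prod
    = ∑ σ ∈ Finset.univ.filter (fun σ : Equiv.Perm (Fin n) => numCycles σ = n - k),
        MonoidAlgebra.of ℚ (Equiv.Perm (Fin n)) σ := by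
  rw [show Finset.univ.filter (fun σ : Equiv.Perm (Fin n) => numCycles σ = n - k)
      = Finset.univ.filter (fun σ : Equiv.Perm (Fin n) => numCycles σ + k = n) from by
    ext σ
    simp only [Finset.mem_filter, Finset.mem_univ, true_and]
    omega]
  exact JucysAux.jm_main n k
end

section
/- In the group algebra ℚ[S_n], the product ∏_{i=1}^n (1 − ξ_i) of the Jucys–Murphy elements equals the alternating sum Σ_{σ∈S_n} (−1)^{d(σ)} σ, where d(σ) = n − c(σ) and c(σ) is the number of cycles of σ. -/
open Equiv Equiv.Perm Finset

def dd {n : ℕ} (σ : Equiv.Perm (Fin n)) : ℕ :=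
  σ.support.card - σ.cycleType.card

namespace JMaux

noncomputable def A (n : ℕ) (k : ℕ) : MonoidAlgebra ℚ (Equiv.Perm (Fin n)) :=
  ∑ σ ∈ Finset.univ.filter (fun σ : Equiv.Perm (Fin n) => ∀ i, σ i ≠ i → (i : ℕ) < k),
    ((Equiv.Perm.sign σ : ℤ) : ℚ) • MonoidAlgebra.of ℚ _ σ

lemma A_zero (n : ℕ) : A n 0 = 1 := by
  have h : (Finset.univ.filter
      (fun σ : Equiv.Perm (Fin n) => ∀ i, σ i ≠ i → (i : ℕ) < 0)) = {1} := by
    ext σ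
    simp only [mem_filter, mem_univ, true_and, mem_singleton]
    constructor
    · intro h
      exact Equiv.ext fun i => not_not.mp fun hi => Nat.not_lt_zero _ (h i hi)
    · rintro rfl; simp
  rw [A, h]
  simp [MonoidAlgebra.one_def, MonoidAlgebra.of_apply]

lemma sign_cast_eq (n : ℕ) (σ : Equiv.Perm (Fin n)) :
    ((Equiv.Perm.sign σ : ℤ) : ℚ) = (-1 : ℚ) ^ (dd σ) := by
  have hcard : σ.cycleType.card ≤ σ.support.card := by
    rw [← Equiv.Perm.sum_cycleType]
    have : ∀ s : Multiset ℕ, (∀ a ∈ s, 1 ≤ a) → Multiset.card s ≤ s.sum := by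
      intro s
      induction s using Multiset.induction_on with
      | empty => simp
      | cons a s ih =>
        intro h
        simp only [Multiset.card_cons, Multiset.sum_cons]
        have := ih (fun b hb => h b (Multiset.mem_cons_of_mem hb))
        have ha := h a (Multiset.mem_cons_self a s)
        omega
    exact this _ fun a ha => (by omega : 1 ≤ 2).trans (Equiv.Perm.two_le_of_mem_cycleType ha)
  have hs := Equiv.Perm.sign_of_cycleType σ
  have key : ((Equiv.Perm.sign σ : ℤ) : ℚ)
      = (-1 : ℚ) ^ (σ.cycleType.sum + Multiset.card σ.cycleType) := by
    rw [hs]; push_cast; norm_num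
  rw [key, Equiv.Perm.sum_cycleType, dd]
  obtain ⟨m, hm⟩ := Nat.exists_eq_add_of_le hcard
  rw [hm, Nat.add_sub_cancel_left]
  rw [show Multiset.card σ.cycleType + m + Multiset.card σ.cycleType
      = m + 2 * Multiset.card σ.cycleType by ring, pow_add, pow_mul]
  norm_num


lemma A_step (n : ℕ) (k : Fin n) : A n k * (1 - JM n k) = A n ((k : ℕ) + 1) := by
  classical
  set F : ℕ → Finset (Equiv.Perm (Fin n)) :=
    fun m => Finset.univ.filter (fun σ : Equiv.Perm (Fin n) => ∀ i, σ i ≠ i → (i : ℕ) < m)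
    with hF
  have hmemF : ∀ (m : ℕ) (σ : Equiv.Perm (Fin n)),
      σ ∈ F m ↔ ∀ i, σ i ≠ i → (i : ℕ) < m := by
    intro m σ; simp [hF]
  have hsub : F (k : ℕ) ⊆ F ((k : ℕ) + 1) := by
    intro σ hσ
    rw [hmemF] at *
    exact fun i hi => (hσ i hi).trans (Nat.lt_succ_self _)
  have hfix : ∀ σ ∈ F (k : ℕ), σ k = k := by
    intro σ hσ
    rw [hmemF] at hσ
    by_contra h
    exact lt_irrefl _ (hσ k h)
  -- forward map membership
  have hfwd : ∀ σ ∈ F (k : ℕ), ∀ i : Fin n, i < k →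
      σ * Equiv.swap i k ∈ F ((k : ℕ) + 1) \ F (k : ℕ) := by
    intro σ hσ i hik
    have hik' : i ≠ k := ne_of_lt hik
    have hσk := hfix σ hσ
    rw [Finset.mem_sdiff, hmemF, hmemF]
    constructor
    · intro j hj
      rcases eq_or_ne j i with rfl | hji
      · exact (Fin.lt_iff_val_lt_val.mp hik).trans (Nat.lt_succ_self _)
      rcases eq_or_ne j k with rfl | hjk
      · exact Nat.lt_succ_self _
      · have : (σ * Equiv.swap i k) j = σ j := by
          simp [Equiv.Perm.mul_apply, Equiv.swap_apply_of_ne_of_ne hji hjk]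
        rw [this] at hj
        rw [hmemF] at hσ
        exact (hσ j hj).trans (Nat.lt_succ_self _)
    · intro hcon
      have h1 : (σ * Equiv.swap i k) k = σ i := by simp [Equiv.Perm.mul_apply]
      have h2 : σ i ≠ k := by
        intro h
        exact hik' (σ.injective (h.trans hσk.symm))
      have := hcon k (by rw [h1]; exact h2)
      exact lt_irrefl _ this
  -- backward facts
  have hbwd : ∀ π ∈ F ((k : ℕ) + 1) \ F (k : ℕ),
      π⁻¹ k < k ∧ π * Equiv.swap (π⁻¹ k) k ∈ F (k : ℕ) := by
    intro π hπ
    rw [Finset.mem_sdiff, hmemF, hmemF] at hπ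
    obtain ⟨h1, h2⟩ := hπ
    push_neg at h2
    obtain ⟨j, hj, hjk⟩ := h2
    have hjk' : (j : ℕ) = (k : ℕ) := by
      have := h1 j hj; omega
    have hjeq : j = k := Fin.ext hjk'
    subst hjeq
    have hπk : π j ≠ j := hj
    have hiK : π⁻¹ j ≠ j := by
      intro h
      apply hπk
      conv_lhs => rw [← h]
      simp
    have hi1 : π (π⁻¹ j) ≠ π⁻¹ j := by
      rw [show π (π⁻¹ j) = j from π.apply_symm_apply j]
      exact fun h => hiK h.symm
    have hilt : (π⁻¹ j : ℕ) < (j : ℕ) := by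
      have := h1 _ hi1
      have : (π⁻¹ j : ℕ) ≠ (j : ℕ) := fun h => hiK (Fin.ext h)
      omega
    refine ⟨Fin.lt_iff_val_lt_val.mpr hilt, ?_⟩
    rw [hmemF]
    intro m hm
    rcases eq_or_ne m (π⁻¹ j) with rfl | hmi
    · exact hilt
    rcases eq_or_ne m j with rfl | hmj
    · exfalso
      apply hm
      simp [Equiv.Perm.mul_apply]
    · have : (π * Equiv.swap (π⁻¹ j) j) m = π m := by
        rw [Equiv.Perm.mul_apply, Equiv.swap_apply_of_ne_of_ne hmi hmj]
      rw [this] at hm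
      have := h1 m hm
      have : (m : ℕ) ≠ (j : ℕ) := fun h => hmj (Fin.ext h)
      omega
  -- main computation
  rw [mul_sub, mul_one]
  have hprod : A n k * JM n k
      = ∑ p ∈ (F (k : ℕ)) ×ˢ (Finset.univ.filter (fun i : Fin n => i < k)),
          ((Equiv.Perm.sign p.1 : ℤ) : ℚ) •
            MonoidAlgebra.of ℚ (Equiv.Perm (Fin n)) (p.1 * Equiv.swap p.2 k) := by
    rw [A, JM, Finset.sum_mul_sum, Finset.sum_product]
    refine Finset.sum_congr rfl fun σ hσ => Finset.sum_congr rfl fun i hi => ?_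
    show _ = ((Equiv.Perm.sign σ : ℤ) : ℚ) •
      MonoidAlgebra.of ℚ (Equiv.Perm (Fin n)) (σ * Equiv.swap i k)
    rw [smul_mul_assoc, ← map_mul]
  have hswapped : A n k * JM n k
      = ∑ π ∈ F ((k : ℕ) + 1) \ F (k : ℕ),
          (-(((Equiv.Perm.sign π : ℤ) : ℚ))) •
            MonoidAlgebra.of ℚ (Equiv.Perm (Fin n)) π := by
    rw [hprod]
    refine Finset.sum_nbij' (fun p => p.1 * Equiv.swap p.2 k)
      (fun π => (π * Equiv.swap (π⁻¹ k) k, π⁻¹ k)) ?_ ?_ ?_ ?_ ?_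
    · rintro ⟨σ, i⟩ hp
      rw [Finset.mem_product] at hp
      exact hfwd σ hp.1 i (Finset.mem_filter.mp hp.2).2
    · intro π hπ
      obtain ⟨hlt, hmem⟩ := hbwd π hπ
      rw [Finset.mem_product]
      exact ⟨hmem, Finset.mem_filter.mpr ⟨Finset.mem_univ _, hlt⟩⟩
    · rintro ⟨σ, i⟩ hp
      rw [Finset.mem_product] at hp
      have hσk := hfix σ hp.1
      have hinv : (σ * Equiv.swap i k)⁻¹ k = i := by
        rw [Equiv.Perm.inv_eq_iff_eq]
        simp [Equiv.Perm.mul_apply, hσk]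
      show (σ * Equiv.swap i k * Equiv.swap ((σ * Equiv.swap i k)⁻¹ k) k,
        (σ * Equiv.swap i k)⁻¹ k) = (σ, i)
      rw [hinv, mul_assoc, Equiv.swap_mul_self, mul_one]
    · intro π hπ
      show π * Equiv.swap (π⁻¹ k) k * Equiv.swap (π⁻¹ k) k = π
      rw [mul_assoc, Equiv.swap_mul_self, mul_one]
    · rintro ⟨σ, i⟩ hp
      rw [Finset.mem_product] at hp
      have hik : i ≠ k := ne_of_lt (Finset.mem_filter.mp hp.2).2
      have hsign : Equiv.Perm.sign (σ * Equiv.swap i k) = - Equiv.Perm.sign σ := by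
        rw [map_mul, Equiv.Perm.sign_swap hik, mul_neg_one]
      rw [hsign]
      push_cast
      ring_nf
  rw [hswapped]
  have hA1 : A n ((k : ℕ) + 1)
      = (∑ π ∈ F ((k : ℕ) + 1) \ F (k : ℕ),
          ((Equiv.Perm.sign π : ℤ) : ℚ) • MonoidAlgebra.of ℚ (Equiv.Perm (Fin n)) π)
        + A n (k : ℕ) := by
    rw [A, A, ← Finset.sum_sdiff hsub]
  rw [hA1]
  simp only [neg_smul, Finset.sum_neg_distrib]
  abel

lemma prefix_eq (n : ℕ) : ∀ k, k ≤ n →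
    ((((List.finRange n).take k).map
        (fun i => (1 : MonoidAlgebra ℚ (Equiv.Perm (Fin n))) - JM n i)).prod) = A n k := by
  intro k
  induction k with
  | zero => intro _; simp [A_zero]
  | succ k ih =>
    intro hk1
    have hk : k < n := hk1
    have hk' : k < (List.finRange n).length := by simpa using hk
    rw [List.take_succ, List.getElem?_eq_getElem hk', List.map_append, List.prod_append,
      ih (le_of_lt hk)]
    have hA := A_step n ((List.finRange n)[k])
    have hval : (((List.finRange n)[k] : Fin n) : ℕ) = k := by
      rw [List.getElem_finRange]
      rfl
    rw [hval] at hA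
    simpa using hA

lemma A_top (n : ℕ) : A n n = ∑ σ : Equiv.Perm (Fin n),
    ((-1 : ℚ) ^ (dd σ)) • MonoidAlgebra.of ℚ (Equiv.Perm (Fin n)) σ := by
  rw [A, Finset.filter_true_of_mem (fun σ _ => fun i _ => i.isLt)]
  exact Finset.sum_congr rfl fun σ _ => by rw [sign_cast_eq]

end JMaux

/-- In `ℚ[S_n]`, the product `∏_{i=1}^n (1 - ξ_i)` of the Jucys–Murphy elements equals
`Σ_{σ ∈ S_n} (-1)^{d(σ)} σ`, where `d(σ) = n - c(σ)`. -/
theorem prod_one_sub_jucysMurphy (n : ℕ) :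
    ((List.finRange n).map
        (fun i => (1 : MonoidAlgebra ℚ (Equiv.Perm (Fin n))) - JM n i)).prod
    = ∑ σ : Equiv.Perm (Fin n),
        ((-1 : ℚ) ^ (dd σ)) • MonoidAlgebra.of ℚ (Equiv.Perm (Fin n)) σ := by
  have h := JMaux.prefix_eq n n le_rfl
  rw [List.take_of_length_le (by simp)] at h
  rw [h, JMaux.A_top]
end

section
/- Every symmetric polynomial in the Jucys–Murphy elements ξ_1, …, ξ_n lies in the center of the group algebra ℚ[S_n]. -/
set_option maxHeartbeats 1000000

/-- Evaluation of a polynomial `P ∈ ℚ[x_1,…,x_n]` at the Jucys–Murphy elements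
`(ξ_1,…,ξ_n)`, each monomial being evaluated in the increasing order of the
variables (since the `ξ_j` commute, the order is irrelevant). -/
noncomputable def evalJM (n : ℕ) (P : MvPolynomial (Fin n) ℚ) :
    MonoidAlgebra ℚ (Equiv.Perm (Fin n)) :=
  ∑ m ∈ P.support,
    P.coeff m • ((List.finRange n).map (fun i => (JM n i) ^ (m i))).prod

variable {n : ℕ}

local notation "A" => MonoidAlgebra ℚ (Equiv.Perm (Fin n))
local notation "Of" => MonoidAlgebra.of ℚ (Equiv.Perm (Fin n))

lemma of_comm_JM (g : Equiv.Perm (Fin n)) (j : Fin n) (hgj : g j = j)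
    (hg : ∀ i, g i < j ↔ i < j) : Of g * JM n j = JM n j * Of g := by
  unfold JM
  rw [Finset.mul_sum, Finset.sum_mul]
  have key : ∀ i : Fin n, Of g * Of (Equiv.swap i j) = Of (Equiv.swap (g i) j) * Of g := by
    intro i
    rw [← map_mul, ← map_mul]
    congr 1
    have := Equiv.swap_apply_apply g i j
    rw [hgj] at this
    rw [this]
    group
  calc ∑ i ∈ Finset.univ.filter (fun i => i < j), Of g * Of (Equiv.swap i j)
      = ∑ i ∈ Finset.univ.filter (fun i => i < j), Of (Equiv.swap (g i) j) * Of g := by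
        exact Finset.sum_congr rfl fun i _ => key i
    _ = ∑ i ∈ Finset.univ.filter (fun i => i < j), Of (Equiv.swap i j) * Of g := by
        apply Finset.sum_equiv (g : Fin n ≃ Fin n)
        · intro i; simp [hg]
        · intro i _; rfl

lemma swap_comm_JM {a b j : Fin n} (ha : a < j) (hb : b < j) :
    Of (Equiv.swap a b) * JM n j = JM n j * Of (Equiv.swap a b) := by
  apply of_comm_JM
  · exact Equiv.swap_apply_of_ne_of_ne (ne_of_gt ha) (ne_of_gt hb)
  · intro i
    rcases eq_or_ne i a with rfl | hia
    · simp [Equiv.swap_apply_left, ha, hb]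
    rcases eq_or_ne i b with rfl | hib
    · simp [Equiv.swap_apply_right, ha, hb]
    · rw [Equiv.swap_apply_of_ne_of_ne hia hib]

lemma jm_commute (i j : Fin n) : Commute (JM n i) (JM n j) := by
  have key : ∀ i j : Fin n, i < j → JM n i * JM n j = JM n j * JM n i := by
    intro i j hij
    unfold JM
    rw [Finset.sum_mul, Finset.mul_sum]
    refine Finset.sum_congr rfl fun a ha => ?_
    simp only [Finset.mem_filter] at ha
    exact swap_comm_JM (lt_trans ha.2 hij) hij
  rcases lt_trichotomy i j with h | rfl | h
  · exact key i j h
  · exact Commute.refl _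
  · exact (key j i h).symm

section Adjacent

variable {kc ks : Fin n} (hadj : (kc : ℕ) + 1 = (ks : ℕ))

include hadj

lemma adj_lt : kc < ks := by rw [Fin.lt_def]; omega
lemma adj_ne : kc ≠ ks := Fin.ne_of_lt (adj_lt hadj)

lemma SS_eq_one : Of (Equiv.swap kc ks) * Of (Equiv.swap kc ks) = 1 := by
  rw [← map_mul, Equiv.swap_mul_self, map_one]

lemma S_comm_JM {j : Fin n} (hjc : j ≠ kc) (hjs : j ≠ ks) :
    Of (Equiv.swap kc ks) * JM n j = JM n j * Of (Equiv.swap kc ks) := by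
  apply of_comm_JM
  · exact Equiv.swap_apply_of_ne_of_ne hjc hjs
  · intro i
    have h1 : (j : ℕ) ≠ (kc : ℕ) := by simpa [Fin.ext_iff] using hjc
    have h2 : (j : ℕ) ≠ (ks : ℕ) := by simpa [Fin.ext_iff] using hjs
    rcases eq_or_ne i kc with rfl | hic
    · rw [Equiv.swap_apply_left, Fin.lt_def, Fin.lt_def]
      omega
    rcases eq_or_ne i ks with rfl | his
    · rw [Equiv.swap_apply_right, Fin.lt_def, Fin.lt_def]
      omega
    · rw [Equiv.swap_apply_of_ne_of_ne hic his]

lemma filter_lt_ks : (Finset.univ.filter (fun i => i < ks) : Finset (Fin n)) =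
    insert kc (Finset.univ.filter (fun i => i < kc)) := by
  ext i
  simp only [Finset.mem_filter, Finset.mem_insert, Finset.mem_univ, true_and, Fin.lt_def]
  constructor
  · intro h
    rcases eq_or_ne (i : ℕ) (kc : ℕ) with he | hne
    · exact Or.inl (Fin.ext he)
    · exact Or.inr (by omega)
  · rintro (rfl | h) <;> omega

lemma conj_JM_kc : Of (Equiv.swap kc ks) * JM n kc * Of (Equiv.swap kc ks) =
    JM n ks - Of (Equiv.swap kc ks) := by
  have hne := adj_ne hadj
  have hlt := adj_lt hadj
  have step : Of (Equiv.swap kc ks) * JM n kc * Of (Equiv.swap kc ks) =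
      ∑ i ∈ Finset.univ.filter (fun i => i < kc), Of (Equiv.swap i ks) := by
    unfold JM
    rw [Finset.mul_sum, Finset.sum_mul]
    refine Finset.sum_congr rfl fun i hi => ?_
    simp only [Finset.mem_filter] at hi
    have hic : i ≠ kc := Fin.ne_of_lt hi.2
    have his : i ≠ ks := Fin.ne_of_lt (lt_trans hi.2 hlt)
    rw [← map_mul, ← map_mul]
    congr 1
    have key := Equiv.swap_apply_apply (Equiv.swap kc ks) i kc
    rw [Equiv.swap_apply_of_ne_of_ne hic his, Equiv.swap_apply_left] at key
    rw [key]
    have : (Equiv.swap kc ks)⁻¹ = Equiv.swap kc ks := Equiv.swap_inv kc ks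
    rw [this]
  rw [step]
  have : JM n ks = Of (Equiv.swap kc ks) +
      ∑ i ∈ Finset.univ.filter (fun i => i < kc), Of (Equiv.swap i ks) := by
    unfold JM
    rw [filter_lt_ks hadj, Finset.sum_insert (by simp)]
  rw [this]; abel

lemma conj_JM_ks : Of (Equiv.swap kc ks) * JM n ks * Of (Equiv.swap kc ks) =
    JM n kc + Of (Equiv.swap kc ks) := by
  have hne := adj_ne hadj
  have hlt := adj_lt hadj
  have step : Of (Equiv.swap kc ks) * JM n ks * Of (Equiv.swap kc ks) =
      ∑ i ∈ Finset.univ.filter (fun i => i < ks), Of (Equiv.swap ((Equiv.swap kc ks) i) kc) := by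
    unfold JM
    rw [Finset.mul_sum, Finset.sum_mul]
    refine Finset.sum_congr rfl fun i hi => ?_
    rw [← map_mul, ← map_mul]
    congr 1
    have key := Equiv.swap_apply_apply (Equiv.swap kc ks) i ks
    rw [Equiv.swap_apply_right] at key
    rw [key]
    have : (Equiv.swap kc ks)⁻¹ = Equiv.swap kc ks := Equiv.swap_inv kc ks
    rw [this]
  rw [step, filter_lt_ks hadj, Finset.sum_insert (by simp)]
  rw [Equiv.swap_apply_left, Equiv.swap_comm ks kc]
  have : ∑ i ∈ Finset.univ.filter (fun i => i < kc), Of (Equiv.swap ((Equiv.swap kc ks) i) kc)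
      = JM n kc := by
    unfold JM
    refine Finset.sum_congr rfl fun i hi => ?_
    simp only [Finset.mem_filter] at hi
    have hic : i ≠ kc := Fin.ne_of_lt hi.2
    have his : i ≠ ks := Fin.ne_of_lt (lt_trans hi.2 hlt)
    rw [Equiv.swap_apply_of_ne_of_ne hic his]
  rw [this]; abel

end Adjacent

section TwoVar
variable {R : Type*} [Ring R]

lemma psum_eq {u v u' v' : R} (huv : Commute u v) (hu'v' : Commute u' v')
    (h1 : u + v = u' + v') (h2 : u * v = u' * v') :
    ∀ d : ℕ, u ^ d + v ^ d = u' ^ d + v' ^ d := by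
  have hrec : ∀ (u v : R), Commute u v → ∀ d : ℕ,
      u ^ (d + 2) + v ^ (d + 2) =
        (u + v) * (u ^ (d + 1) + v ^ (d + 1)) - (u * v) * (u ^ d + v ^ d) := by
    intro u v h d
    have c1 : v * u ^ (d + 1) = u ^ (d + 1) * v := (h.symm.pow_right _).eq
    have c2 : u * v * u ^ d = u ^ (d + 1) * v := by
      rw [mul_assoc, (h.symm.pow_right d).eq, ← mul_assoc, ← pow_succ']
    have c3 : u * v * v ^ d = u * v ^ (d + 1) := by rw [mul_assoc, ← pow_succ']
    rw [add_mul, mul_add, mul_add, mul_add, c1, c2, c3]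
    have e : d + 1 + 1 = d + 2 := rfl
    rw [e, pow_succ' u (d + 1), pow_succ' v (d + 1)]
    abel
  intro d
  induction d using Nat.strong_induction_on with
  | _ d ih =>
    match d with
    | 0 => simp
    | 1 => simpa using h1
    | (d + 2) =>
      rw [hrec u v huv d, hrec u' v' hu'v' d, h1, h2, ih (d+1) (by omega), ih d (by omega)]

lemma symmMonomial_eq {u v u' v' : R} (huv : Commute u v) (hu'v' : Commute u' v')
    (h1 : u + v = u' + v') (h2 : u * v = u' * v') (a b : ℕ) :
    u ^ a * v ^ b + u ^ b * v ^ a = u' ^ a * v' ^ b + u' ^ b * v' ^ a := by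
  have key : ∀ (u v : R), Commute u v → ∀ a d : ℕ,
      u ^ a * v ^ (a + d) + u ^ (a + d) * v ^ a = (u * v) ^ a * (u ^ d + v ^ d) := by
    intro u v h a d
    have e1 : u ^ a * v ^ (a + d) = (u * v) ^ a * v ^ d := by
      rw [h.mul_pow, pow_add, mul_assoc]
    have e2 : u ^ (a + d) * v ^ a = (u * v) ^ a * u ^ d := by
      rw [h.mul_pow, pow_add, mul_assoc, (h.pow_pow d a).eq, ← mul_assoc]
    rw [e1, e2, mul_add, add_comm]
  rcases le_total a b with hab | hab
  · obtain ⟨d, rfl⟩ := Nat.exists_eq_add_of_le hab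
    rw [key u v huv a d, key u' v' hu'v' a d, h2, psum_eq huv hu'v' h1 h2 d]
  · obtain ⟨d, rfl⟩ := Nat.exists_eq_add_of_le hab
    rw [add_comm (u ^ (b + d) * v ^ b), add_comm (u' ^ (b + d) * v' ^ b)]
    rw [key u v huv b d, key u' v' hu'v' b d, h2, psum_eq huv hu'v' h1 h2 d]

end TwoVar

section Conj
variable {R : Type*} [Ring R] {S : R} (hSS : S * S = 1)
include hSS

lemma conjPowAux (x : R) (e : ℕ) : S * x ^ e * S = (S * x * S) ^ e := by
  induction e with
  | zero => simpa using hSS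
  | succ e ih =>
    rw [pow_succ, pow_succ, ← ih]
    have : S * (x ^ e * x) * S = S * x ^ e * (S * S) * x * S := by
      rw [hSS]; noncomm_ring
    rw [this]; noncomm_ring

lemma conj_list_prod (l : List R) :
    S * l.prod * S = (l.map fun x => S * x * S).prod := by
  induction l with
  | nil => simpa using hSS
  | cons a l ih =>
    rw [List.map_cons, List.prod_cons, List.prod_cons, ← ih]
    have : S * (a * l.prod) * S = S * a * (S * S) * l.prod * S := by rw [hSS]; noncomm_ring
    rw [this]; noncomm_ring

end Conj

lemma list_prod_eq_noncommProd {M : Type*} [Monoid M] (n : ℕ) (f : Fin n → M)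
    (comm : ((Finset.univ : Finset (Fin n)) : Set (Fin n)).Pairwise (Function.onFun Commute f)) :
    ((List.finRange n).map f).prod = Finset.univ.noncommProd f comm := by
  have hc : ((List.finRange n).toFinset : Set (Fin n)).Pairwise (Function.onFun Commute f) := by
    rw [List.toFinset_finRange]; exact comm
  calc ((List.finRange n).map f).prod
      = (List.finRange n).toFinset.noncommProd f hc :=
        (Finset.noncommProd_toFinset (List.finRange n) f hc (List.nodup_finRange n)).symm
    _ = Finset.univ.noncommProd f comm :=
        Finset.noncommProd_congr (List.toFinset_finRange n) (fun x _ => rfl) hc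


section Main

lemma prodPow_split {M : Type*} [Monoid M] {kc ks : Fin n} (hne : kc ≠ ks) (f : Fin n → M)
    (comm : ∀ i j, Commute (f i) (f j)) :
    ((List.finRange n).map f).prod =
      f kc * (f ks * ((Finset.univ.erase kc).erase ks).noncommProd f
        (fun x _ y _ _ => comm x y)) := by
  rw [list_prod_eq_noncommProd n f (fun x _ y _ _ => comm x y)]
  rw [← Finset.mul_noncommProd_erase Finset.univ (Finset.mem_univ kc) f
    (fun x _ y _ _ => comm x y) (fun x _ y _ _ => comm x y)]
  congr 1
  rw [← Finset.mul_noncommProd_erase (Finset.univ.erase kc)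
    (Finset.mem_erase.mpr ⟨hne.symm, Finset.mem_univ ks⟩) f
    (fun x _ y _ _ => comm x y) (fun x _ y _ _ => comm x y)]

lemma adj_comm_evalJM (P : MvPolynomial (Fin n) ℚ) (hP : P.IsSymmetric)
    {kc ks : Fin n} (hadj : (kc : ℕ) + 1 = (ks : ℕ)) :
    Of (Equiv.swap kc ks) * evalJM n P = evalJM n P * Of (Equiv.swap kc ks) := by
  have hne : kc ≠ ks := adj_ne hadj
  set s : Equiv.Perm (Fin n) := Equiv.swap kc ks with hs
  set S : A := Of s with hSdef
  have hSS : S * S = 1 := SS_eq_one hadj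
  set η : Fin n → A := fun j => S * JM n j * S with hη
  have hηc : η kc = JM n ks - S := conj_JM_kc hadj
  have hηs : η ks = JM n kc + S := conj_JM_ks hadj
  have hηother : ∀ j, j ≠ kc → j ≠ ks → η j = JM n j := by
    intro j h1 h2
    rw [hη]
    dsimp only
    rw [S_comm_JM hadj h1 h2, mul_assoc, hSS, mul_one]
  have hconj2 : ∀ a b : A, a * b = b * a → (S * a * S) * (S * b * S) = (S * b * S) * (S * a * S) := by
    intro a b hab
    have e : ∀ a b : A, (S * a * S) * (S * b * S) = S * (a * b) * S := by
      intro a b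
      calc (S * a * S) * (S * b * S) = S * a * (S * S) * b * S := by noncomm_ring
        _ = S * (a * b) * S := by rw [hSS]; noncomm_ring
    rw [e, e, hab]
  have hηcomm : ∀ i j, Commute (η i) (η j) := fun i j => hconj2 _ _ (jm_commute i j).eq
  have hSJc : S * JM n kc = JM n ks * S - 1 := by
    have := conj_JM_kc hadj
    have h2 : S * JM n kc * S * S = (JM n ks - S) * S := by rw [this]
    rw [mul_assoc, hSS, mul_one] at h2
    rw [h2, sub_mul, hSS]
  have hSJs : S * JM n ks = JM n kc * S + 1 := by
    have := conj_JM_ks hadj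
    have h2 : S * JM n ks * S * S = (JM n kc + S) * S := by rw [this]
    rw [mul_assoc, hSS, mul_one] at h2
    rw [h2, add_mul, hSS]
  have hJsS : JM n ks * S = S * JM n kc + 1 := by rw [hSJc]; abel
  have hsum : η kc + η ks = JM n kc + JM n ks := by rw [hηc, hηs]; abel
  have hprod : η kc * η ks = JM n kc * JM n ks := by
    rw [hηc, hηs]
    have expand : (JM n ks - S) * (JM n kc + S) =
        JM n ks * JM n kc + JM n ks * S - S * JM n kc - S * S := by noncomm_ring
    rw [expand, hSS, hJsS, (jm_commute ks kc).eq]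
    abel
  -- the involution on exponents
  set ι : (Fin n →₀ ℕ) → (Fin n →₀ ℕ) := fun m => Finsupp.equivMapDomain s m with hι
  have hιapply : ∀ m j, ι m j = m (s j) := by
    intro m j
    rw [hι]
    dsimp only
    rw [Finsupp.equivMapDomain_apply, hs, Equiv.symm_swap]
  have hιinv : ∀ m, ι (ι m) = m := by
    intro m
    ext j
    rw [hιapply, hιapply]
    congr 1
    rw [hs]
    simp
  have hιkc : ∀ m, ι m kc = m ks := by intro m; rw [hιapply, hs, Equiv.swap_apply_left]
  have hιks : ∀ m, ι m ks = m kc := by intro m; rw [hιapply, hs, Equiv.swap_apply_right]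
  have hιother : ∀ m j, j ≠ kc → j ≠ ks → ι m j = m j := by
    intro m j h1 h2
    rw [hιapply, hs, Equiv.swap_apply_of_ne_of_ne h1 h2]
  have hcoeff : ∀ m, P.coeff (ι m) = P.coeff m := by
    intro m
    have hren : MvPolynomial.rename (⇑s) P = P := hP s
    have := MvPolynomial.coeff_rename_mapDomain (⇑s) s.injective P m
    rw [hren] at this
    rw [← this]
    congr 1
    rw [hι]
    exact Finsupp.equivMapDomain_eq_mapDomain s m
  have hsupp : ∀ m, m ∈ P.support ↔ ι m ∈ P.support := by
    intro m
    rw [MvPolynomial.mem_support_iff, MvPolynomial.mem_support_iff, hcoeff]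
  -- products
  set F : (Fin n →₀ ℕ) → A := fun m => ((List.finRange n).map fun i => JM n i ^ m i).prod with hF
  set G : (Fin n →₀ ℕ) → A := fun m => ((List.finRange n).map fun i => η i ^ m i).prod with hG
  set R : (Fin n →₀ ℕ) → A := fun m =>
    ((Finset.univ.erase kc).erase ks).noncommProd (fun j => JM n j ^ m j)
      (fun x _ y _ _ => (jm_commute x y).pow_pow _ _) with hR
  have hRι : ∀ m, R (ι m) = R m := by
    intro m
    rw [hR]
    dsimp only
    refine Finset.noncommProd_congr rfl (fun j hj => ?_) _
    simp only [Finset.mem_erase] at hj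
    rw [hιother m j hj.2.1 hj.1]
  have hGsplit : ∀ m, G m = η kc ^ m kc * (η ks ^ m ks * R m) := by
    intro m
    rw [hG]
    dsimp only
    rw [prodPow_split hne (fun j => η j ^ m j) (fun i j => (hηcomm i j).pow_pow _ _)]
    congr 2
    refine Finset.noncommProd_congr rfl (fun j hj => ?_) _
    simp only [Finset.mem_erase] at hj
    rw [hηother j hj.2.1 hj.1]
  have hFsplit : ∀ m, F m = JM n kc ^ m kc * (JM n ks ^ m ks * R m) := by
    intro m
    rw [hF]
    dsimp only
    exact prodPow_split hne (fun j => JM n j ^ m j) (fun i j => (jm_commute i j).pow_pow _ _)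
  have hkey : ∀ m, G m + G (ι m) = F m + F (ι m) := by
    intro m
    rw [hGsplit m, hGsplit (ι m), hFsplit m, hFsplit (ι m), hRι m]
    rw [hιkc, hιks]
    have lhs : η kc ^ m kc * (η ks ^ m ks * R m) + η kc ^ m ks * (η ks ^ m kc * R m)
        = (η kc ^ m kc * η ks ^ m ks + η kc ^ m ks * η ks ^ m kc) * R m := by noncomm_ring
    have rhs : JM n kc ^ m kc * (JM n ks ^ m ks * R m) + JM n kc ^ m ks * (JM n ks ^ m kc * R m)
        = (JM n kc ^ m kc * JM n ks ^ m ks + JM n kc ^ m ks * JM n ks ^ m kc) * R m := by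
      noncomm_ring
    rw [lhs, rhs, symmMonomial_eq (hηcomm kc ks) (jm_commute kc ks) hsum hprod (m kc) (m ks)]
  -- conjugation of the evaluation
  have hfix : S * evalJM n P * S = evalJM n P := by
    unfold evalJM
    rw [Finset.mul_sum, Finset.sum_mul]
    have conj_term : ∀ m : Fin n →₀ ℕ,
        S * (P.coeff m • ((List.finRange n).map fun i => JM n i ^ m i).prod) * S
          = P.coeff m • G m := by
      intro m
      rw [mul_smul_comm, smul_mul_assoc]
      congr 1
      rw [conj_list_prod hSS, List.map_map, hG]
      dsimp only
      congr 1
      refine List.map_congr_left fun i _ => ?_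
      simp only [Function.comp_apply]
      rw [conjPowAux hSS (JM n i) (m i), hη]
    calc ∑ m ∈ P.support, S * (P.coeff m • ((List.finRange n).map fun i => JM n i ^ m i).prod) * S
        = ∑ m ∈ P.support, P.coeff m • G m := Finset.sum_congr rfl fun m _ => conj_term m
      _ = ∑ m ∈ P.support, P.coeff m • F m := by
          set e : (Fin n →₀ ℕ) ≃ (Fin n →₀ ℕ) := ⟨ι, ι, hιinv, hιinv⟩ with he
          have reidx : ∀ H : (Fin n →₀ ℕ) → A,
              ∑ m ∈ P.support, P.coeff m • H (ι m) = ∑ m ∈ P.support, P.coeff m • H m := by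
            intro H
            refine Finset.sum_equiv e (fun m => hsupp m) (fun m _ => ?_)
            have : e m = ι m := rfl
            rw [this, hcoeff]
          have h2 : (∑ m ∈ P.support, P.coeff m • G m) + (∑ m ∈ P.support, P.coeff m • G m)
              = (∑ m ∈ P.support, P.coeff m • F m) + (∑ m ∈ P.support, P.coeff m • F m) := by
            nth_rewrite 2 [← reidx G]
            nth_rewrite 2 [← reidx F]
            rw [← Finset.sum_add_distrib, ← Finset.sum_add_distrib]
            refine Finset.sum_congr rfl fun m _ => ?_
            rw [← smul_add, ← smul_add, hkey m]
          have h3 : (2 : ℚ) • (∑ m ∈ P.support, P.coeff m • G m)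
              = (2 : ℚ) • (∑ m ∈ P.support, P.coeff m • F m) := by
            rw [two_smul, two_smul]
            exact h2
          exact smul_right_injective _ (by norm_num : (2:ℚ) ≠ 0) h3
  calc S * evalJM n P = S * evalJM n P * (S * S) := by rw [hSS, mul_one]
    _ = (S * evalJM n P * S) * S := by noncomm_ring
    _ = evalJM n P * S := by rw [hfix]

end Main

/-- Every symmetric polynomial in the Jucys–Murphy elements `ξ_1,…,ξ_n` lies in the
center of the group algebra `ℚ[S_n]`. -/
theorem symmetric_jucysMurphy_mem_center (n : ℕ) (P : MvPolynomial (Fin n) ℚ)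
    (hP : P.IsSymmetric) :
    evalJM n P ∈ Subring.center (MonoidAlgebra ℚ (Equiv.Perm (Fin n))) := by
  set x := evalJM n P with hx
  have hof : ∀ g : Equiv.Perm (Fin n),
      MonoidAlgebra.of ℚ (Equiv.Perm (Fin n)) g * x = x * MonoidAlgebra.of ℚ (Equiv.Perm (Fin n)) g := by
    set Og := MonoidAlgebra.of ℚ (Equiv.Perm (Fin n)) with hOg
    let H : Subgroup (Equiv.Perm (Fin n)) :=
      { carrier := {g | Og g * x = x * Og g}
        one_mem' := by
          show Og 1 * x = x * Og 1
          rw [map_one, one_mul, mul_one]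
        mul_mem' := by
          intro a b ha hb
          show Og (a * b) * x = x * Og (a * b)
          rw [map_mul, mul_assoc, hb, ← mul_assoc, ha, mul_assoc]
        inv_mem' := by
          intro a ha
          show Og a⁻¹ * x = x * Og a⁻¹
          have ha' : Og a * x = x * Og a := ha
          have h1 : Og a⁻¹ * Og a = 1 := by rw [← map_mul, inv_mul_cancel, map_one]
          have h2 : Og a * Og a⁻¹ = 1 := by rw [← map_mul, mul_inv_cancel, map_one]
          calc Og a⁻¹ * x = Og a⁻¹ * x * (Og a * Og a⁻¹) := by rw [h2, mul_one]
            _ = Og a⁻¹ * (x * Og a) * Og a⁻¹ := by noncomm_ring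
            _ = Og a⁻¹ * (Og a * x) * Og a⁻¹ := by rw [ha']
            _ = (Og a⁻¹ * Og a) * x * Og a⁻¹ := by noncomm_ring
            _ = x * Og a⁻¹ := by rw [h1, one_mul] }
    have hadjmem : ∀ kc ks : Fin n, (kc : ℕ) + 1 = (ks : ℕ) → Equiv.swap kc ks ∈ H := by
      intro kc ks h
      show Og (Equiv.swap kc ks) * x = x * Og (Equiv.swap kc ks)
      rw [hx]
      exact adj_comm_evalJM P hP h
    have hswap : ∀ d : ℕ, ∀ a b : Fin n, (a : ℕ) + d + 1 = (b : ℕ) → Equiv.swap a b ∈ H := by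
      intro d
      induction d with
      | zero => intro a b h; exact hadjmem a b (by omega)
      | succ d ih =>
        intro a b h
        have hbn := b.isLt
        have hb' : (a : ℕ) + d + 1 < n := by omega
        set b' : Fin n := ⟨(a : ℕ) + d + 1, hb'⟩ with hb'def
        have hb'v : (b' : ℕ) = (a : ℕ) + d + 1 := rfl
        have h1 : Equiv.swap b' b ∈ H := hadjmem b' b (by omega)
        have h2 : Equiv.swap a b' ∈ H := ih a b' (by omega)
        have hane : a ≠ b' := by
          intro he
          have := congrArg Fin.val he
          omega
        have habne : a ≠ b := by
          intro he
          have := congrArg Fin.val he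
          omega
        have key := Equiv.swap_apply_apply (Equiv.swap b' b) a b'
        rw [Equiv.swap_apply_of_ne_of_ne hane habne, Equiv.swap_apply_left] at key
        rw [key]
        exact H.mul_mem (H.mul_mem h1 h2) (H.inv_mem h1)
    have hallswap : ∀ g ∈ {σ : Equiv.Perm (Fin n) | σ.IsSwap}, g ∈ H := by
      rintro g ⟨a, b, hab, rfl⟩
      rcases lt_or_gt_of_ne hab with h | h
      · have h' : (a : ℕ) < (b : ℕ) := h
        exact hswap ((b : ℕ) - (a : ℕ) - 1) a b (by omega)
      · have h' : (b : ℕ) < (a : ℕ) := h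
        rw [Equiv.swap_comm]
        exact hswap ((a : ℕ) - (b : ℕ) - 1) b a (by omega)
    intro g
    have hg : g ∈ H := by
      have htop : (⊤ : Subgroup (Equiv.Perm (Fin n))) ≤ H := by
        rw [← Equiv.Perm.closure_isSwap]
        exact (Subgroup.closure_le H).mpr hallswap
      exact htop (Subgroup.mem_top g)
    exact hg
  rw [Subring.mem_center_iff]
  intro y
  induction y using MonoidAlgebra.induction_on with
  | of g => exact hof g
  | add f g hf hg => rw [add_mul, mul_add, hf, hg]
  | smul r f hf => rw [smul_mul_assoc, mul_smul_comm, hf]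
end
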